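/- Let x : M² → ℂ² be a compact orientable Lagrangian self-shrinker. Then ∫_M (2 - |A|²) dv = 8π(1 - g), where g is the genus of M² and |A|² the squared norm of the second fundamental form. In particular, if |A|² ≤ 2 everywhere, then g ≥ 1 forces |A|² ≡ 2 and g = 1. -/

import Mathlib

/-!
The self-shrinker equation `𝐇 = -x^⊥` gives `⟨x, 𝐇⟩ = -|x^⊥|² = -|𝐇|²`, so integrating
`Δ|x|² = 4 + 2⟨x, 𝐇⟩` yields `∫ (2 - |𝐇|²) = 0`. By the Gauss equation,
`2 - |A|² = 2K + (2 - |𝐇|²)` pointwise, and Gauss–Bonnet gives `∫ (2 - |A|²) = 2 ∫ K = 8π(1 - g)`.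
If `|A|² ≤ 2` the left side is nonnegative, so `g ≤ 1`; for `g = 1` the continuous nonnegative
function `2 - |A|²` has zero integral and hence vanishes.
-/

open MeasureTheory

/-- The real (Euclidean) inner product on `ℂ² = ℂ × ℂ ≅ ℝ⁴`. -/
noncomputable def rinner (a b : ℂ × ℂ) : ℝ :=
  ((starRingEnd ℂ) a.1 * b.1).re + ((starRingEnd ℂ) a.2 * b.2).re

lemma rinner_comm (a b : ℂ × ℂ) : rinner a b = rinner b a := by
  simp only [rinner, Complex.mul_re, Complex.conj_re, Complex.conj_im]
  ring

lemma rinner_sub_right (a b c : ℂ × ℂ) : rinner a (b - c) = rinner a b - rinner a c := by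
  simp only [rinner, Prod.fst_sub, Prod.snd_sub, mul_sub, Complex.sub_re]
  ring

lemma rinner_neg_right (a b : ℂ × ℂ) : rinner a (-b) = -rinner a b := by
  simp only [rinner, Prod.fst_neg, Prod.snd_neg, mul_neg, Complex.neg_re]
  ring

lemma rinner_neg_left (a b : ℂ × ℂ) : rinner (-a) b = -rinner a b := by
  rw [rinner_comm, rinner_neg_right, rinner_comm]

lemma rinner_self_neg (a : ℂ × ℂ) : rinner (-a) (-a) = rinner a a := by
  rw [rinner_neg_left, rinner_neg_right, neg_neg]

lemma rinner_eq_rinner_self_of_rinner_sub_eq_zero {y z : ℂ × ℂ} (h : rinner z (y - z) = 0) :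
    rinner z y = rinner z z := by
  rw [rinner_sub_right] at h
  linarith

lemma rinner_meanCurvature_of_selfShrinker {x xperp H : ℂ × ℂ}
    (hperp : rinner xperp (x - xperp) = 0) (hss : H = -xperp) :
    rinner x H = -rinner H H := by
  rw [hss, rinner_self_neg, rinner_neg_right, rinner_comm,
    rinner_eq_rinner_self_of_rinner_sub_eq_zero hperp]

section Integral

variable {M : Type*} [MeasurableSpace M] {μ : Measure M}

lemma integral_two_sub_rinner_self_eq_zero {x H : M → ℂ × ℂ} {lap : (M → ℝ) → M → ℝ}
    (hlap : ∀ p, lap (fun q => rinner (x q) (x q)) p = 2 * 2 + 2 * rinner (x p) (H p))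
    (hxH : ∀ p, rinner (x p) (H p) = -rinner (H p) (H p))
    (hdiv : ∫ p, lap (fun q => rinner (x q) (x q)) p ∂μ = 0) :
    ∫ p, (2 - rinner (H p) (H p)) ∂μ = 0 := by
  have hlap_eq : ∀ p, lap (fun q => rinner (x q) (x q)) p = 2 * (2 - rinner (H p) (H p)) := by
    intro p
    rw [hlap, hxH]
    ring
  simp only [hlap_eq, integral_const_mul] at hdiv
  linarith

lemma Continuous.eq_zero_of_integral_eq_zero [TopologicalSpace M] [μ.IsOpenPosMeasure]
    {f : M → ℝ} (hf : Continuous f) (hfi : Integrable f μ) (hnn : 0 ≤ f)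
    (h : ∫ p, f p ∂μ = 0) : f = 0 :=
  (hf.ae_eq_iff_eq μ continuous_const).1 ((integral_eq_zero_iff_of_nonneg hnn hfi).1 h)

end Integral

theorem stmt_10_general (M : Type*) [TopologicalSpace M]
    [MeasurableSpace M] (μ : Measure M) [μ.IsOpenPosMeasure] [IsFiniteMeasure μ]
    (x Hv xperp : M → ℂ × ℂ) (T : M → Submodule ℝ (ℂ × ℂ))
    (A2 K : M → ℝ) (lap : (M → ℝ) → (M → ℝ)) (g : ℕ)
    (hxperp : ∀ p, x p - xperp p ∈ T p ∧ ∀ v ∈ T p, rinner (xperp p) v = 0)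
    (hss : ∀ p, Hv p = -xperp p)
    (hlap_normsq : ∀ p,
      lap (fun q => rinner (x q) (x q)) p = 2 * 2 + 2 * rinner (x p) (Hv p))
    (hdiv : ∀ f : M → ℝ, ∫ p, lap f p ∂μ = 0)
    (hGauss : ∀ p, 2 * K p = rinner (Hv p) (Hv p) - A2 p)
    (hGaussBonnet : ∫ p, K p ∂μ = 4 * Real.pi * (1 - (g : ℝ)))
    (hA2cont : Continuous A2) (hKint : Integrable K μ)
    (hHint : Integrable (fun p => rinner (Hv p) (Hv p)) μ) :
    (∫ p, (2 - A2 p) ∂μ = 8 * Real.pi * (1 - (g : ℝ))) ∧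
      ((∀ p, A2 p ≤ 2) → 1 ≤ g → (∀ p, A2 p = 2) ∧ g = 1) := by
  have hxH p : rinner (x p) (Hv p) = -rinner (Hv p) (Hv p) :=
    rinner_meanCurvature_of_selfShrinker ((hxperp p).2 _ (hxperp p).1) (hss p)
  have hH := integral_two_sub_rinner_self_eq_zero hlap_normsq hxH (hdiv _)
  have hsplit : (fun p => 2 - A2 p) = fun p => 2 * K p + (2 - rinner (Hv p) (Hv p)) := by
    funext p
    linarith [hGauss p]
  have hKint2 : Integrable (fun p => 2 * K p) μ := hKint.const_mul 2
  have hHint2 : Integrable (fun p => 2 - rinner (Hv p) (Hv p)) μ := (integrable_const 2).sub hHint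
  have hmain : ∫ p, (2 - A2 p) ∂μ = 8 * Real.pi * (1 - (g : ℝ)) := by
    rw [hsplit, integral_add hKint2 hHint2, integral_const_mul, hGaussBonnet, hH]
    ring
  refine ⟨hmain, fun hle hg => ?_⟩
  have hnn : 0 ≤ fun p => 2 - A2 p := fun p => sub_nonneg.2 (hle p)
  have hg_eq : g = 1 := by
    have : (g : ℝ) ≤ 1 := by nlinarith [integral_nonneg (μ := μ) hnn, Real.pi_pos]
    exact le_antisymm (by exact_mod_cast this) hg
  have hzero : (fun p => 2 - A2 p) = 0 :=
    Continuous.eq_zero_of_integral_eq_zero (μ := μ) (continuous_const.sub hA2cont)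
      (by rw [hsplit]; exact hKint2.add hHint2) hnn (by rw [hmain, hg_eq]; norm_num)
  exact ⟨fun p => (sub_eq_zero.1 (congrFun hzero p)).symm, hg_eq⟩

/-- Lemma 4.1: for a compact orientable Lagrangian self-shrinker `x : M² → ℂ²` of
genus `g`, one has `∫_M (2 - |A|²) dv = 8π(1 - g)`; in particular, if `|A|² ≤ 2`
everywhere, then `g ≥ 1` forces `|A|² ≡ 2` and `g = 1`.  The surface is encoded
by its position `x`, tangent planes `T`, mean curvature vector `Hv`, normal
projection `xperp` of `x`, squared second fundamental form norm `A2`, Gauss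
curvature `K`, volume measure `μ` and Laplace–Beltrami operator `lap`, subject
to: the Lagrangian condition `J(T_pM) ⟂ T_pM`, the self-shrinker equation
`𝐇 = -x^⊥`, the standard facts `Δ|x|² = 4 + 2⟨x, Δx⟩` (`Δx = 𝐇`),
`⟨x, x^⊥⟩ = |x^⊥|²`, the divergence theorem, the Gauss equation
`2K = H² - |A|²`, and the Gauss–Bonnet theorem `∫_M K dv = 4π(1 - g)`. -/
theorem stmt_10 (M : Type*) [TopologicalSpace M] [CompactSpace M]
    [MeasurableSpace M] (μ : Measure M) [μ.IsOpenPosMeasure] [IsFiniteMeasure μ]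
    (x Hv xperp : M → ℂ × ℂ) (T : M → Submodule ℝ (ℂ × ℂ))
    (A2 K : M → ℝ) (lap : (M → ℝ) → (M → ℝ)) (g : ℕ)
    (hdim : ∀ p, Module.finrank ℝ (T p) = 2)
    (hLag : ∀ p, ∀ v ∈ T p, ∀ w ∈ T p, rinner (Complex.I • v) w = 0)
    (hxperp : ∀ p, x p - xperp p ∈ T p ∧ ∀ v ∈ T p, rinner (xperp p) v = 0)
    (hHnormal : ∀ p, ∀ v ∈ T p, rinner (Hv p) v = 0)
    (hss : ∀ p, Hv p = -xperp p)
    (hlap_normsq : ∀ p,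
      lap (fun q => rinner (x q) (x q)) p = 2 * 2 + 2 * rinner (x p) (Hv p))
    (hdiv : ∀ f : M → ℝ, ∫ p, lap f p ∂μ = 0)
    (hGauss : ∀ p, 2 * K p = rinner (Hv p) (Hv p) - A2 p)
    (hGaussBonnet : ∫ p, K p ∂μ = 4 * Real.pi * (1 - (g : ℝ)))
    (hA2cont : Continuous A2) (hKint : Integrable K μ) (hA2int : Integrable A2 μ)
    (hHint : Integrable (fun p => rinner (Hv p) (Hv p)) μ) :
    (∫ p, (2 - A2 p) ∂μ = 8 * Real.pi * (1 - (g : ℝ))) ∧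
      ((∀ p, A2 p ≤ 2) → 1 ≤ g → (∀ p, A2 p = 2) ∧ g = 1) :=
  stmt_10_general M μ x Hv xperp T A2 K lap g hxperp hss hlap_normsq hdiv hGauss hGaussBonnet
    hA2cont hKint hHint
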